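/- Let q > 0 and e ≥ 0 be real numbers, let n ≥ 2 be an integer, and let Q be the 2n×2n real matrix with entries (indices i,j ∈ {1,…,2n}): Q_{ij} = 0 if i+j < 2n+1; Q_{ij} = (q−1+δ_{i+j,2n+1})·q^{n(n+e−3)−e+j} if i+j ≥ 2n+1 and j ≤ n; and Q_{ij} = (q−1+δ_{i+j,2n+1})·q^{n(n+e−3)+j−1} + δ_{ij}·q^{n(n+e−2)−e}·(q^e−q) if i+j ≥ 2n+1 and j > n (real powers of q; δ the Kronecker delta). For i ∈ {1,…,n} let v_i be the column vector (0,…,0, q^{e+i−1},…,q^{e+i−1}, −1,…,−1, 0,…,0)ᵀ with n−i leading zeros, then i entries equal to q^{e+i−1}, then i entries equal to −1, then n−i trailing zeros. Then Q·v_i = −q^{(n−1)(n−1+e)}·v_i, i.e. v_i is an eigenvector of Q with eigenvalue −q^{(n−1)(n−1+e)}. -/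

import Mathlib

open Real

/-- The quotient matrix `Q` of the opposition graph on maximal flags of a rank-`n` polar
space `PS(n,e,q)` with respect to a point stabilizer; rows/columns are indexed by
`Fin (2n)`, where `a : Fin (2n)` corresponds to the `1`-based index `i = a+1 ∈ {1,…,2n}`.
All powers of `q` are real powers. -/
noncomputable def QmatB (q e : ℝ) (n : ℕ) : Matrix (Fin (2 * n)) (Fin (2 * n)) ℝ :=
  fun a b =>
    if (a : ℕ) + 1 + ((b : ℕ) + 1) < 2 * n + 1 then 0
    else if (b : ℕ) + 1 ≤ n then
      (q - 1 + (if (a : ℕ) + 1 + ((b : ℕ) + 1) = 2 * n + 1 then 1 else 0)) *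
        q ^ ((n : ℝ) * ((n : ℝ) + e - 3) - e + (((b : ℕ) : ℝ) + 1))
    else
      (q - 1 + (if (a : ℕ) + 1 + ((b : ℕ) + 1) = 2 * n + 1 then 1 else 0)) *
          q ^ ((n : ℝ) * ((n : ℝ) + e - 3) + (((b : ℕ) : ℝ) + 1) - 1) +
        (if a = b then 1 else 0) * q ^ ((n : ℝ) * ((n : ℝ) + e - 2) - e) * (q ^ e - q)

/-- The vector `v_i = (0,…,0,q^(e+i-1),…,q^(e+i-1),-1,…,-1,0,…,0)ᵀ` with `n-i` leading
zeros, `i` entries `q^(e+i-1)`, `i` entries `-1` and `n-i` trailing zeros. -/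
noncomputable def vvecB (q e : ℝ) (n i : ℕ) : Fin (2 * n) → ℝ :=
  fun k =>
    if (k : ℕ) + 1 ≤ n - i then 0
    else if (k : ℕ) + 1 ≤ n then q ^ (e + (i : ℝ) - 1)
    else if (k : ℕ) + 1 ≤ n + i then -1
    else 0

/-!
Put `c = q^(n(n+e-3))` and `p = q^(e-1)`. With `0`-based indices, `Q / c` has entry
`((q-1)·[a+b ≥ 2n-1] + [a+b = 2n-1]) · w_b + [a = b ≥ n] · q^n (1 - 1/p)`, where `w_b = q^b/p`
for `b < n` and `w_b = q^b` otherwise. The product `w_b v_b` is `q^(b+i)` on the block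
`[n-i, n)` and `-q^b` on `[n, n+i)`, so the tail sums `(q-1) Σ_{b ≥ m} w_b v_b` telescope to
differences of powers of `q`. Row `a` of `(Q / c) v` is that tail sum from `m = 2n-1-a`, plus
the anti-diagonal term `w_m v_m` and the diagonal term, and on each of the four blocks of rows
this comes out as `-(q^n/p) v_a`; finally `c q^n / p = q^((n-1)(n-1+e))`.
-/

open Finset Matrix

namespace QmatB

section CommRing

variable {K : Type*} [CommRing K]

def geomBlock (q : K) (lo hi b : ℕ) : K := if lo ≤ b ∧ b < hi then q ^ b else 0

lemma sub_one_mul_sum_Ico_geomBlock (q : K) {lo hi N : ℕ} (m : ℕ) (hlo : lo ≤ hi)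
    (hN : hi ≤ N) :
    (q - 1) * ∑ b ∈ Ico m N, geomBlock q lo hi b = q ^ max m hi - q ^ max m lo := by
  have hsum : ∑ b ∈ Ico m N, geomBlock q lo hi b = ∑ b ∈ Ico (max m lo) (max m hi), q ^ b := by
    simp only [geomBlock]
    rw [← sum_filter]
    congr 1
    ext b
    simp only [mem_filter, mem_Ico]
    omega
  rw [hsum, mul_comm, geom_sum_Ico_mul q (by omega)]

end CommRing

section Field

variable {K : Type*} [Field K] (p q : K) (n : ℕ)

def colWeight (b : ℕ) : K := q ^ b * if b < n then p⁻¹ else 1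

/-- `QmatB q e n` divided by `q^(n(n+e-3))`, when `p = q^(e-1)`. -/
def normEntry (a b : ℕ) : K :=
  (if 2 * n ≤ a + b + 1 then (q - 1) * colWeight p q n b else 0) +
    (if a + b + 1 = 2 * n then colWeight p q n b else 0) +
    if a = b ∧ n ≤ b then q ^ n * (1 - p⁻¹) else 0

def eigvecEntry (i k : ℕ) : K :=
  if n - i ≤ k ∧ k < n then p * q ^ i else if n ≤ k ∧ k < n + i then -1 else 0

variable {p n}

lemma colWeight_mul_eigvecEntry (hp : p ≠ 0) (i b : ℕ) :
    colWeight p q n b * eigvecEntry p q n i b =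
      q ^ i * geomBlock q (n - i) n b - geomBlock q n (n + i) b := by
  unfold colWeight eigvecEntry geomBlock
  split_ifs <;> first | omega | (field_simp; ring)

lemma sum_range_normEntry_mul {a : ℕ} (ha : a < 2 * n) (f : ℕ → K) :
    ∑ b ∈ range (2 * n), normEntry p q n a b * f b =
      (q - 1) * ∑ b ∈ Ico (2 * n - 1 - a) (2 * n), colWeight p q n b * f b +
        colWeight p q n (2 * n - 1 - a) * f (2 * n - 1 - a) +
        if n ≤ a then q ^ n * (1 - p⁻¹) * f a else 0 := by
  simp only [normEntry, add_mul, ite_mul, zero_mul, sum_add_distrib]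
  congr 2
  · rw [mul_sum, ← sum_filter]
    refine sum_congr ?_ fun _ _ => mul_assoc _ _ _
    ext b
    simp only [mem_filter, mem_Ico, mem_range]
    omega
  · rw [sum_eq_single (2 * n - 1 - a)]
    · rw [if_pos (by omega)]
    · intro b _ hb
      rw [if_neg (by omega)]
    · intro h
      simp only [mem_range] at h
      omega
  · rw [sum_eq_single a]
    · simp
    · intro b _ hb
      rw [if_neg (by omega)]
    · intro h
      simp only [mem_range] at h
      omega

theorem of_normEntry_mulVec_eigvecEntry (hp : p ≠ 0) {i : ℕ} (hi : i ≤ n) :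
    (Matrix.of fun a b : Fin (2 * n) => normEntry p q n a b) *ᵥ
        (fun k : Fin (2 * n) => eigvecEntry p q n i k) =
      (-(q ^ n / p)) • fun k : Fin (2 * n) => eigvecEntry p q n i k := by
  ext ⟨a, ha⟩
  simp only [mulVec, dotProduct, of_apply, Pi.smul_apply, smul_eq_mul]
  rw [Fin.sum_univ_eq_sum_range (fun b => normEntry p q n a b * eigvecEntry p q n i b),
    sum_range_normEntry_mul q ha]
  simp only [colWeight_mul_eigvecEntry q hp, sum_sub_distrib, ← mul_sum, mul_sub]
  rw [mul_left_comm, sub_one_mul_sum_Ico_geomBlock q _ (Nat.sub_le n i) (by omega),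
    sub_one_mul_sum_Ico_geomBlock q _ (Nat.le_add_right n i) (by omega)]
  unfold geomBlock eigvecEntry
  rcases lt_or_ge a (n - i) with h₁ | h₁
  · simp (disch := omega) only [max_eq_left, if_pos, if_neg]
    ring
  rcases lt_or_ge a n with h₂ | h₂
  · simp (disch := omega) only [max_eq_left, max_eq_right, if_pos, if_neg]
    field_simp
    ring
  rcases lt_or_ge a (n + i) with h₃ | h₃
  · simp (disch := omega) only [max_eq_left, max_eq_right, if_pos, if_neg]
    field_simp
    ring
  · simp (disch := omega) only [max_eq_right, if_pos, if_neg]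
    have hsplit : q ^ i * q ^ (n - i) = q ^ n := by rw [← pow_add, Nat.add_sub_cancel' hi]
    linear_combination -hsplit

end Field

section Real

variable {q : ℝ} (hq : 0 < q) (e : ℝ) (n : ℕ)
include hq

lemma eq_smul_normEntry :
    QmatB q e n = q ^ ((n : ℝ) * (n + e - 3)) •
      Matrix.of fun a b : Fin (2 * n) => normEntry (q ^ (e - 1)) q n a b := by
  have hlow (b : ℕ) : q ^ ((n : ℝ) * (n + e - 3) - e + (b + 1)) =
      q ^ ((n : ℝ) * (n + e - 3)) * (q ^ b * (q ^ (e - 1))⁻¹) := by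
    rw [← Real.rpow_natCast, ← Real.rpow_neg hq.le, ← Real.rpow_add hq, ← Real.rpow_add hq]
    ring_nf
  have hhigh (b : ℕ) : q ^ ((n : ℝ) * (n + e - 3) + (b + 1) - 1) =
      q ^ ((n : ℝ) * (n + e - 3)) * q ^ b := by
    rw [← Real.rpow_natCast, ← Real.rpow_add hq]
    ring_nf
  have hdiag : q ^ ((n : ℝ) * (n + e - 2) - e) * (q ^ e - q) =
      q ^ ((n : ℝ) * (n + e - 3)) * (q ^ n * (1 - (q ^ (e - 1))⁻¹)) := by
    have h₁ : q ^ ((n : ℝ) * (n + e - 2) - e) * q ^ e = q ^ ((n : ℝ) * (n + e - 3)) * q ^ n := by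
      rw [← Real.rpow_natCast, ← Real.rpow_add hq, ← Real.rpow_add hq]
      ring_nf
    have h₂ : q ^ ((n : ℝ) * (n + e - 2) - e) * q =
        q ^ ((n : ℝ) * (n + e - 3)) * (q ^ n * (q ^ (e - 1))⁻¹) := by
      rw [← Real.rpow_natCast, ← Real.rpow_neg hq.le, ← Real.rpow_add_one hq.ne',
        ← Real.rpow_add hq, ← Real.rpow_add hq]
      ring_nf
    linear_combination h₁ - h₂
  ext a b
  simp only [QmatB, normEntry, colWeight, Matrix.smul_apply, of_apply, smul_eq_mul, Fin.ext_iff,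
    mul_assoc, hlow, hhigh, hdiag]
  split_ifs <;> first | omega | ring

lemma vvecB_eq_eigvecEntry (i : ℕ) :
    vvecB q e n i = fun k : Fin (2 * n) => eigvecEntry (q ^ (e - 1)) q n i k := by
  have hval : q ^ (e + i - 1) = q ^ (e - 1) * q ^ i := by
    rw [← Real.rpow_natCast, ← Real.rpow_add hq]
    ring_nf
  ext k
  simp only [vvecB, eigvecEntry, hval]
  split_ifs <;> first | omega | rfl

end Real

end QmatB

open QmatB

theorem quotient_matrix_eigenvector_B_general (q : ℝ) (hq : 0 < q) (e : ℝ)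
    (n : ℕ) (i : ℕ) (hi2 : i ≤ n) :
    (QmatB q e n).mulVec (vvecB q e n i) =
      (-(q ^ (((n : ℝ) - 1) * ((n : ℝ) - 1 + e)))) • vvecB q e n i := by
  have hp : q ^ (e - 1) ≠ 0 := (Real.rpow_pos_of_pos hq _).ne'
  have heigval : q ^ (((n : ℝ) - 1) * ((n : ℝ) - 1 + e)) =
      q ^ ((n : ℝ) * (n + e - 3)) * (q ^ n / q ^ (e - 1)) := by
    rw [← Real.rpow_natCast, ← Real.rpow_sub hq, ← Real.rpow_add hq]
    ring_nf
  rw [eq_smul_normEntry hq, vvecB_eq_eigvecEntry hq, smul_mulVec,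
    of_normEntry_mulVec_eigvecEntry q hp hi2, smul_smul, heigval, mul_neg]

/-- `v_i` is an eigenvector of `Q` with eigenvalue `-q^((n-1)(n-1+e))`. -/
theorem quotient_matrix_eigenvector_B (q : ℝ) (hq : 0 < q) (e : ℝ) (he : 0 ≤ e)
    (n : ℕ) (hn : 2 ≤ n) (i : ℕ) (hi1 : 1 ≤ i) (hi2 : i ≤ n) :
    (QmatB q e n).mulVec (vvecB q e n i) =
      (-(q ^ (((n : ℝ) - 1) * ((n : ℝ) - 1 + e)))) • vvecB q e n i :=
  quotient_matrix_eigenvector_B_general q hq e n i hi2
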